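/- Let z₁, …, zₙ be distinct complex numbers and let σ₁, …, σₙ be integers satisfying the neutrality condition σ₁ + ⋯ + σₙ = −2, and set λⱼ = σⱼ² + 2σⱼ ∈ ℤ. Let M(z) = (az + b)/(cz + d) be a Möbius transformation with ad − bc = 1 and c·zⱼ + d ≠ 0 for all j. Then, with all powers understood as integer powers of nonzero complex numbers, ∏_{j<k} (M(zⱼ) − M(z_k))^{2σⱼσ_k} = ∏_j (c·zⱼ + d)^{2λⱼ} · ∏_{j<k} (zⱼ − z_k)^{2σⱼσ_k}. In particular, since M′(zⱼ) = (c·zⱼ + d)^{−2}, the normalized Coulomb gas correlation C[𝛔] = ∏_{j<k} (zⱼ − z_k)^{2σⱼσ_k} is exactly Möbius invariant as a differential of conformal dimension λⱼ at zⱼ when all charges are integers. -/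

import Mathlib

/-!
Since `ad - bc = 1`, `M zⱼ - M zₖ = (zⱼ - zₖ) / ((c zⱼ + d)(c zₖ + d))`, so each factor of the
product over pairs picks up `(c zⱼ + d)^(-2σⱼσₖ) (c zₖ + d)^(-2σⱼσₖ)`. Collecting the powers of
`c zⱼ + d` over all `k ≠ j` gives the exponent `-2σⱼ ∑_{k ≠ j} σₖ`, which neutrality turns into
`-2σⱼ (-2 - σⱼ) = 2λⱼ`.
-/

open Finset

theorem Finset.prod_zpow_eq_zpow_sum₀ {ι G : Type*} [CommGroupWithZero G] (s : Finset ι)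
    (e : ι → ℤ) {x : G} (hx : x ≠ 0) : ∏ i ∈ s, x ^ e i = x ^ ∑ i ∈ s, e i := by
  classical
  induction s using Finset.cons_induction with
  | empty => simp
  | cons a s ha ih => rw [prod_cons, sum_cons, zpow_add₀ hx, ih]

theorem mobius_sub_mobius {K : Type*} [Field K] {a b c d w w' : K} (hw : c * w + d ≠ 0)
    (hw' : c * w' + d ≠ 0) :
    (a * w + b) / (c * w + d) - (a * w' + b) / (c * w' + d) =
      (a * d - b * c) * (w - w') / ((c * w + d) * (c * w' + d)) := by
  rw [div_sub_div _ _ hw hw']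
  ring

theorem Finset.prod_prod_Ioi_mul_zpow_eq_prod_zpow_sum_compl {ι G : Type*} [LinearOrder ι]
    [Fintype ι] [LocallyFiniteOrderTop ι] [LocallyFiniteOrderBot ι] [CommGroupWithZero G]
    {f : ι → G} (hf : ∀ j, f j ≠ 0) {e : ι → ι → ℤ} (he : ∀ j k, e j k = e k j) :
    ∏ j, ∏ k ∈ Ioi j, (f j * f k) ^ e j k = ∏ j, f j ^ ∑ k ∈ {j}ᶜ, e j k :=
  calc ∏ j, ∏ k ∈ Ioi j, (f j * f k) ^ e j k
      = ∏ j, ∏ k ∈ Ioi j, f j ^ e j k * f k ^ e k j :=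
        prod_congr rfl fun j _ => prod_congr rfl fun k _ => by rw [mul_zpow, he k j]
    _ = ∏ j, ∏ k ∈ {j}ᶜ, f j ^ e j k :=
        prod_prod_Ioi_mul_eq_prod_prod_off_diag fun k j => f j ^ e j k
    _ = ∏ j, f j ^ ∑ k ∈ {j}ᶜ, e j k :=
        prod_congr rfl fun j _ => prod_zpow_eq_zpow_sum₀ _ _ (hf j)

theorem sum_compl_neg_two_mul_mul_eq_of_sum_eq_neg_two {ι : Type*} [Fintype ι] [DecidableEq ι]
    {σ : ι → ℤ} (hσ : ∑ j, σ j = -2) (j : ι) :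
    ∑ k ∈ {j}ᶜ, -(2 * σ j * σ k) = 2 * (σ j ^ 2 + 2 * σ j) := by
  have hrest : ∑ k ∈ {j}ᶜ, σ k = -2 - σ j := by
    rw [← hσ, ← sum_compl_add_sum {j} σ, sum_singleton, add_sub_cancel_right]
  rw [sum_neg_distrib, ← mul_sum, hrest]
  ring

theorem coulomb_gas_mobius_invariant_integer_charges_general (n : ℕ) (z : Fin n → ℂ)
    (σ : Fin n → ℤ) (hσ : ∑ j, σ j = -2)
    (lam : Fin n → ℤ) (hlam : ∀ j, lam j = σ j ^ 2 + 2 * σ j)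
    (a b c d : ℂ) (habcd : a * d - b * c = 1)
    (M : ℂ → ℂ) (hM : ∀ w, M w = (a * w + b) / (c * w + d))
    (hden : ∀ j, c * z j + d ≠ 0) :
    ∏ j, ∏ k ∈ Ioi j, (M (z j) - M (z k)) ^ (2 * σ j * σ k) =
      (∏ j, (c * z j + d) ^ (2 * lam j)) *
        ∏ j, ∏ k ∈ Ioi j, (z j - z k) ^ (2 * σ j * σ k) := by
  set f : Fin n → ℂ := fun j => c * z j + d
  have hdiff (j k : Fin n) : M (z j) - M (z k) = (f j * f k)⁻¹ * (z j - z k) := by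
    rw [hM, hM, mobius_sub_mobius (hden j) (hden k), habcd, one_mul, div_eq_inv_mul]
  calc ∏ j, ∏ k ∈ Ioi j, (M (z j) - M (z k)) ^ (2 * σ j * σ k)
      = ∏ j, ∏ k ∈ Ioi j, ((f j * f k) ^ (-(2 * σ j * σ k)) * (z j - z k) ^ (2 * σ j * σ k)) := by
        simp_rw [hdiff, mul_zpow _ (z _ - z _), inv_zpow']
    _ = (∏ j, ∏ k ∈ Ioi j, (f j * f k) ^ (-(2 * σ j * σ k))) *
          ∏ j, ∏ k ∈ Ioi j, (z j - z k) ^ (2 * σ j * σ k) := by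
        simp_rw [prod_mul_distrib]
    _ = _ := by
        rw [prod_prod_Ioi_mul_zpow_eq_prod_zpow_sum_compl hden fun j k => by ring]
        simp_rw [sum_compl_neg_two_mul_mul_eq_of_sum_eq_neg_two hσ, hlam]

/-- Exact Möbius invariance of the normalized Coulomb gas correlation
for integer charges: with distinct points `z j`, integer charges `σ j` satisfying the
neutrality condition `∑ σ j = -2`, conformal dimensions `lam j = σ j ^ 2 + 2 σ j ∈ ℤ`,
and a normalized Möbius map `M(z) = (a z + b)/(c z + d)`, `a d - b c = 1`, whose pole
avoids the `z j`, one has (with integer powers of nonzero complex numbers)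
`∏_{j<k} (M z_j - M z_k) ^ (2 σ_j σ_k)
  = ∏_j (c z_j + d) ^ (2 lam_j) ⬝ ∏_{j<k} (z_j - z_k) ^ (2 σ_j σ_k)`. -/
theorem coulomb_gas_mobius_invariant_integer_charges (n : ℕ) (z : Fin n → ℂ)
    (hz : Function.Injective z)
    (σ : Fin n → ℤ) (hσ : ∑ j, σ j = -2)
    (lam : Fin n → ℤ) (hlam : ∀ j, lam j = σ j ^ 2 + 2 * σ j)
    (a b c d : ℂ) (habcd : a * d - b * c = 1)
    (M : ℂ → ℂ) (hM : ∀ w, M w = (a * w + b) / (c * w + d))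
    (hden : ∀ j, c * z j + d ≠ 0) :
    ∏ j, ∏ k ∈ Ioi j, (M (z j) - M (z k)) ^ (2 * σ j * σ k) =
      (∏ j, (c * z j + d) ^ (2 * lam j)) *
        ∏ j, ∏ k ∈ Ioi j, (z j - z k) ^ (2 * σ j * σ k) :=
  coulomb_gas_mobius_invariant_integer_charges_general n z σ hσ lam hlam a b c d habcd M hM hden
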